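/- arXiv:0704.0813 — 4 statements merged into one kernel-verified Lean document; each statement's English description precedes it below -/
import Mathlib

section
/- Let R > 0, let V : ℝ³ → ℝ be continuous and vanish outside the closed ball of radius R centered at the origin, and let a₀ ∈ ℝ. Let f : ℝ³ → ℝ be twice continuously differentiable, satisfy the zero-energy scattering equation −Δf(x) + (1/2)V(x)f(x) = 0 for every x ∈ ℝ³, and satisfy f(x) = 1 − a₀/|x| for every x with |x| ≥ R. Then ∫_{ℝ³} V(x) f(x) dx = 8π a₀. -/
noncomputable section
open MeasureTheory

abbrev E3 := EuclideanSpace ℝ (Fin 3)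

/-- partial derivative of a real-valued function on ℝ³ in coordinate `a` -/
def pdR (a : Fin 3) (f : E3 → ℝ) (x : E3) : ℝ :=
  fderiv ℝ f x (EuclideanSpace.single a 1)

/-- Laplacian on ℝ³ of a real-valued function -/
def lapR (f : E3 → ℝ) (x : E3) : ℝ := ∑ a : Fin 3, pdR a (pdR a f) x

lemma inner1 (L z : ℝ) (hL : 0 < L) :
    ∫ y in (-L)..L, L / (Real.sqrt (L^2 + z^2 + y^2))^3
      = 2*L^2 / ((L^2+z^2) * Real.sqrt (2*L^2+z^2)) := by
  have hc2pos : 0 < L^2 + z^2 := by positivity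
  have key : ∀ y : ℝ, HasDerivAt (fun y => L * y / ((L^2+z^2) * Real.sqrt (y^2+(L^2+z^2))))
      (L / (Real.sqrt (L^2 + z^2 + y^2))^3) y := by
    intro y
    have hs : 0 < y^2 + (L^2+z^2) := by positivity
    set s := Real.sqrt (y^2 + (L^2+z^2)) with hsdef
    have hspos : 0 < s := Real.sqrt_pos.2 hs
    have hs2 : s^2 = y^2 + (L^2+z^2) := Real.sq_sqrt hs.le
    have hsq : HasDerivAt (fun y : ℝ => Real.sqrt (y^2+(L^2+z^2))) ((2*y) / (2*s)) y := by
      have h1 : HasDerivAt (fun y : ℝ => y^2+(L^2+z^2)) (2*y) y := by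
        simpa using ((hasDerivAt_pow 2 y).add_const (L^2+z^2))
      exact h1.sqrt hs.ne'
    have hden : HasDerivAt (fun y : ℝ => (L^2+z^2) * Real.sqrt (y^2+(L^2+z^2)))
        ((L^2+z^2) * ((2*y) / (2*s))) y := hsq.const_mul (L^2+z^2)
    have hnum : HasDerivAt (fun y : ℝ => L * y) L y := by
      simpa using (hasDerivAt_id y).const_mul L
    have hdenne : (L^2+z^2) * s ≠ 0 := by positivity
    have H := hnum.div hden hdenne
    have hsw : Real.sqrt (L^2 + z^2 + y^2) = s := by rw [hsdef, add_comm]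
    have eq : (L * ((L^2+z^2) * s) - L * y * ((L^2+z^2) * (2 * y / (2 * s)))) / ((L^2+z^2) * s) ^ 2
        = L / s ^ 3 := by
      field_simp
      ring_nf
      linear_combination hs2
    rw [hsw]
    exact eq ▸ H
  have hcont : ContinuousOn (fun y => L / (Real.sqrt (L^2 + z^2 + y^2))^3) (Set.uIcc (-L) L) := by
    apply ContinuousOn.div continuousOn_const
    · fun_prop
    · intro y _
      have h0 : 0 < L^2 + z^2 + y^2 := by positivity
      positivity
  rw [intervalIntegral.integral_eq_sub_of_hasDerivAt (fun y _ => key y) hcont.intervalIntegrable]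
  have hsw : Real.sqrt (L^2 + (L^2+z^2)) = Real.sqrt (2*L^2+z^2) := by ring_nf
  have hsw2 : Real.sqrt ((-L)^2 + (L^2+z^2)) = Real.sqrt (2*L^2+z^2) := by ring_nf
  rw [show ((-L):ℝ)^2 = L^2 by ring] at hsw2 ⊢
  rw [hsw]
  have hne : (L^2+z^2) * Real.sqrt (2*L^2+z^2) ≠ 0 := by
    have h2 : (0:ℝ) < 2*L^2+z^2 := by positivity
    positivity
  field_simp
  ring

lemma outer1 (L : ℝ) (hL : 0 < L) :
    ∫ z in (-L)..L, 2*L^2 / ((L^2+z^2) * Real.sqrt (2*L^2+z^2)) = 2*Real.pi/3 := by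
  have key : ∀ z : ℝ, HasDerivAt (fun z => 2 * Real.arctan (z / Real.sqrt (2*L^2+z^2)))
      (2*L^2 / ((L^2+z^2) * Real.sqrt (2*L^2+z^2))) z := by
    intro z
    have hs' : 0 < 2*L^2 + z^2 := by positivity
    set s := Real.sqrt (2*L^2+z^2) with hsdef
    have hspos : 0 < s := Real.sqrt_pos.2 hs'
    have hs2 : s^2 = 2*L^2+z^2 := Real.sq_sqrt hs'.le
    have h1 : HasDerivAt (fun z : ℝ => 2*L^2+z^2) (2*z) z := by
      simpa using ((hasDerivAt_pow 2 z).const_add (2*L^2))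
    have hsq : HasDerivAt (fun z : ℝ => Real.sqrt (2*L^2+z^2)) ((2*z) / (2*s)) z :=
      h1.sqrt hs'.ne'
    have hu : HasDerivAt (fun z : ℝ => z / Real.sqrt (2*L^2+z^2))
        ((1 * s - z * ((2*z)/(2*s))) / s^2) z :=
      (hasDerivAt_id z).div hsq (by positivity)
    have harc := (Real.hasDerivAt_arctan (z/s)).comp z hu
    have H := harc.const_mul 2
    refine H.congr_deriv ?_
    have e1 : (1 * s - z * ((2*z)/(2*s))) / s^2 = 2*L^2 / s^3 := by
      field_simp
      ring_nf
      linear_combination hs2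
    have e2 : 1 + (z/s)^2 = (2*(L^2+z^2))/s^2 := by
      field_simp
      linear_combination hs2
    rw [e1, e2]
    have h1' : (0:ℝ) < L^2+z^2 := by positivity
    field_simp
  have hcont : ContinuousOn (fun z => 2*L^2 / ((L^2+z^2) * Real.sqrt (2*L^2+z^2)))
      (Set.uIcc (-L) L) := by
    apply ContinuousOn.div continuousOn_const
    · fun_prop
    · intro z _
      have h1 : (0:ℝ) < L^2+z^2 := by positivity
      have h2 : (0:ℝ) < 2*L^2+z^2 := by positivity
      positivity
  rw [intervalIntegral.integral_eq_sub_of_hasDerivAt (fun z _ => key z) hcont.intervalIntegrable]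
  have h3 : Real.sqrt (2*L^2+L^2) = Real.sqrt 3 * L := by
    rw [show 2*L^2+L^2 = 3*L^2 by ring, Real.sqrt_mul (by norm_num : (0:ℝ) ≤ 3),
      Real.sqrt_sq hL.le]
  have h4 : Real.sqrt (2*L^2+(-L)^2) = Real.sqrt 3 * L := by
    rw [show (-L:ℝ)^2 = L^2 by ring]; exact h3
  rw [h3, h4]
  have hsqrt3 : (0:ℝ) < Real.sqrt 3 := by positivity
  have e5 : L / (Real.sqrt 3 * L) = 1 / Real.sqrt 3 := by field_simp
  have e6 : (-L) / (Real.sqrt 3 * L) = -(1 / Real.sqrt 3) := by field_simp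
  rw [e5, e6, Real.arctan_neg]
  have e7 : Real.arctan (1 / Real.sqrt 3) = Real.pi / 6 := by
    rw [← Real.tan_pi_div_six,
      Real.arctan_tan (by linarith [Real.pi_pos]) (by linarith [Real.pi_pos])]
  rw [e7]; ring

lemma face2 (L : ℝ) (hL : 0 < L) :
    ∫ q in Set.Icc ((-L,-L) : ℝ×ℝ) ((L,L) : ℝ×ℝ), L / (Real.sqrt (L^2 + q.1^2 + q.2^2))^3
      = 2*Real.pi/3 := by
  have hcont : Continuous (fun q : ℝ×ℝ => L / (Real.sqrt (L^2 + q.1^2 + q.2^2))^3) := by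
    apply Continuous.div continuous_const
    · fun_prop
    · intro q
      have h0 : 0 < L^2 + q.1^2 + q.2^2 := by positivity
      positivity
  have hInt : IntegrableOn (fun q : ℝ×ℝ => L / (Real.sqrt (L^2 + q.1^2 + q.2^2))^3)
      (Set.Icc ((-L,-L) : ℝ×ℝ) ((L,L) : ℝ×ℝ)) := hcont.integrableOn_Icc
  rw [Set.Icc_prod_eq] at hInt ⊢
  rw [MeasureTheory.Measure.volume_eq_prod] at hInt ⊢
  rw [MeasureTheory.setIntegral_prod _ hInt]
  have inner' : ∀ x : ℝ, ∫ y in Set.Icc (-L) L, L / (Real.sqrt (L^2 + x^2 + y^2))^3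
      = 2*L^2 / ((L^2+x^2) * Real.sqrt (2*L^2+x^2)) := by
    intro x
    rw [MeasureTheory.integral_Icc_eq_integral_Ioc,
      ← intervalIntegral.integral_of_le (by linarith : -L ≤ L)]
    exact inner1 L x hL
  calc ∫ x in Set.Icc (-L) L, ∫ y in Set.Icc (-L) L, L / (Real.sqrt (L^2 + x^2 + y^2))^3
      = ∫ x in Set.Icc (-L) L, 2*L^2 / ((L^2+x^2) * Real.sqrt (2*L^2+x^2)) := by
        apply setIntegral_congr_fun (by measurability)
        intro x _
        exact inner' x
    _ = 2*Real.pi/3 := by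
        rw [MeasureTheory.integral_Icc_eq_integral_Ioc,
          ← intervalIntegral.integral_of_le (by linarith : -L ≤ L)]
        exact outer1 L hL

lemma abs_apply_le_norm (x : E3) (i : Fin 3) : |x i| ≤ ‖x‖ := by
  rw [EuclideanSpace.norm_eq, ← Real.sqrt_sq_eq_abs]
  apply Real.sqrt_le_sqrt
  calc x i ^2 = ‖x i‖^2 := by simp [sq_abs]
    _ ≤ ∑ j, ‖x j‖^2 := Finset.single_le_sum (f := fun j => ‖x j‖^2)
        (fun j _ => by positivity) (Finset.mem_univ i)

lemma grad_out (R a₀ : ℝ) (hR : 0 < R) (f : E3 → ℝ)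
    (hasymp : ∀ x : E3, R ≤ ‖x‖ → f x = 1 - a₀ / ‖x‖)
    (p : E3) (hp : R < ‖p‖) (i : Fin 3) :
    pdR i f p = a₀ * p i / ‖p‖^3 := by
  have hp0 : 0 < ‖p‖ := lt_trans hR hp
  have hopen : IsOpen {x : E3 | R < ‖x‖} := isOpen_lt continuous_const continuous_norm
  have hev : f =ᶠ[nhds p] (fun x => 1 - a₀ * ‖x‖⁻¹) := by
    filter_upwards [hopen.mem_nhds hp] with x hx
    rw [hasymp x hx.le, div_eq_mul_inv]
  have hn2 : HasFDerivAt (fun x : E3 => ‖x‖^2) (2 • (innerSL ℝ p)) p :=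
    (hasStrictFDerivAt_norm_sq p).hasFDerivAt
  have hq0 : ‖p‖^2 ≠ 0 := by positivity
  have hnorm : HasFDerivAt (fun x : E3 => ‖x‖)
      ((1 / (2 * ‖p‖)) • (2 • (innerSL ℝ p))) p := by
    have := hn2.sqrt hq0
    simpa only [Real.sqrt_sq (norm_nonneg _)] using this
  have hninv : HasFDerivAt (fun x : E3 => ‖x‖⁻¹)
      ((-(‖p‖^2)⁻¹) • ((1 / (2 * ‖p‖)) • (2 • (innerSL ℝ p)))) p :=
    (hasDerivAt_inv hp0.ne').comp_hasFDerivAt p hnorm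
  have hg := (hninv.const_mul a₀).const_sub 1
  have hfd : fderiv ℝ f p = fderiv ℝ (fun x : E3 => 1 - a₀ * ‖x‖⁻¹) p := hev.fderiv_eq
  rw [pdR, hfd, hg.fderiv]
  have hinner : (innerSL ℝ p) (EuclideanSpace.single i (1:ℝ)) = p i := by
    simp [EuclideanSpace.inner_single_right]
  simp only [ContinuousLinearMap.neg_apply, ContinuousLinearMap.coe_smul', Pi.smul_apply,
    smul_eq_mul, hinner]
  field_simp
  ring

lemma face_val (R a₀ L : ℝ) (hR : 0 < R) (hRL : R < L) (f : E3 → ℝ)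
    (hasymp : ∀ x : E3, R ≤ ‖x‖ → f x = 1 - a₀ / ‖x‖)
    (i : Fin 3) (c : ℝ) (hc : |c| = L) (x : Fin 2 → ℝ) :
    pdR i f ((EuclideanSpace.equiv (Fin 3) ℝ).symm (i.insertNth c x))
      = a₀ * c / (Real.sqrt (L^2 + (x 0)^2 + (x 1)^2))^3 := by
  set p : E3 := (EuclideanSpace.equiv (Fin 3) ℝ).symm (i.insertNth c x) with hpdef
  have happ : ∀ j, p j = (i.insertNth c x : Fin 3 → ℝ) j := fun j => by rw [hpdef]; rfl
  have hpi : p i = c := by rw [happ, Fin.insertNth_apply_same]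
  have hnp : ‖p‖ = Real.sqrt (L^2 + (x 0)^2 + (x 1)^2) := by
    rw [EuclideanSpace.norm_eq]
    congr 1
    have h1 : ∀ j, ‖p j‖^2 = ((i.insertNth c x : Fin 3 → ℝ) j)^2 := by
      intro j; rw [happ]; simp [sq_abs]
    rw [Finset.sum_congr rfl (fun j _ => h1 j)]
    rw [Fin.sum_univ_succAbove (fun j => ((i.insertNth c x : Fin 3 → ℝ) j)^2) i]
    simp only [Fin.insertNth_apply_same, Fin.insertNth_apply_succAbove]
    rw [Fin.sum_univ_two]
    rw [← hc, sq_abs]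
    ring
  have hgt : R < ‖p‖ := by
    calc R < L := hRL
      _ = |p i| := by rw [hpi, hc]
      _ ≤ ‖p‖ := abs_apply_le_norm p i
  rw [grad_out R a₀ hR f hasymp p hgt i, hpi, hnp]

lemma pi_face_integral (L : ℝ) (hL : 0 < L) :
    ∫ x in Set.Icc (fun _ => -L : Fin 2 → ℝ) (fun _ => L : Fin 2 → ℝ),
      L / (Real.sqrt (L^2 + (x 0)^2 + (x 1)^2))^3 = 2*Real.pi/3 := by
  have hpre : (⇑(MeasurableEquiv.piFinTwo (fun _ : Fin 2 => ℝ))) ⁻¹'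
      (Set.Icc ((-L,-L) : ℝ×ℝ) ((L,L) : ℝ×ℝ))
      = Set.Icc (fun _ => -L : Fin 2 → ℝ) (fun _ => L : Fin 2 → ℝ) := by
    ext y
    simp only [Set.mem_preimage, Set.mem_Icc, MeasurableEquiv.piFinTwo_apply,
      Prod.le_def, Pi.le_def, Fin.forall_fin_two]
  rw [← hpre]
  exact (MeasurePreserving.setIntegral_preimage_emb (volume_preserving_piFinTwo (fun _ => ℝ))
      (MeasurableEquiv.measurableEmbedding _)
      (fun q : ℝ×ℝ => L / (Real.sqrt (L^2 + q.1^2 + q.2^2))^3)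
      (Set.Icc ((-L,-L) : ℝ×ℝ) ((L,L) : ℝ×ℝ))).trans (face2 L hL)


/-- If `f` solves the zero-energy scattering equation for a compactly supported `V` and
has the asymptotics `f(x) = 1 - a₀/|x|` outside the support, then `∫ V f = 8π a₀`. -/
theorem integral_V_scattering_solution
    (R : ℝ) (hR : 0 < R) (V : E3 → ℝ) (hV : Continuous V)
    (hVsupp : ∀ x : E3, R < ‖x‖ → V x = 0)
    (a₀ : ℝ) (f : E3 → ℝ) (hf : ContDiff ℝ 2 f)
    (hscat : ∀ x : E3, -lapR f x + (1/2) * V x * f x = 0)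
    (hasymp : ∀ x : E3, R ≤ ‖x‖ → f x = 1 - a₀ / ‖x‖) :
    ∫ x : E3, V x * f x = 8 * Real.pi * a₀ := by
  set L := R + 1 with hLdef
  have hRL : R < L := by rw [hLdef]; linarith
  have hL : 0 < L := lt_trans hR hRL
  have hlap : ∀ x, lapR f x = 1/2 * V x * f x := fun x => by linarith [hscat x]
  have hVf : ∀ x, V x * f x = 2 * lapR f x := fun x => by rw [hlap]; ring
  have hlap_cont : Continuous (lapR f) := by
    rw [funext hlap]
    exact (continuous_const.mul hV).mul hf.continuous
  have hlap0 : ∀ x : E3, R < ‖x‖ → lapR f x = 0 := fun x hx => by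
    rw [hlap, hVsupp x hx]; ring
  have hpdC1 : ∀ i, ContDiff ℝ 1 (pdR i f) := fun i =>
    (hf.fderiv_right (m := 1) (by norm_num)).clm_apply contDiff_const
  letI : PartialOrder E3 := PartialOrder.lift WithLp.ofLp (WithLp.ofLp_injective 2)
  set eL := EuclideanSpace.equiv (Fin 3) ℝ with heL
  set a : E3 := eL.symm (fun _ => -L) with ha
  set b : E3 := eL.symm (fun _ => L) with hb
  have hle : a ≤ b := fun i => by
    show -L ≤ L
    linarith
  have hcs : HasCompactSupport (lapR f) := by
    apply HasCompactSupport.intro (isCompact_closedBall (0:E3) R)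
    intro x hx
    apply hlap0
    simpa [Metric.mem_closedBall, dist_zero_right, not_le] using hx
  have hInt : IntegrableOn (lapR f) (Set.Icc a b) :=
    (hlap_cont.integrable_of_hasCompactSupport hcs).integrableOn
  have hdiv := integral_divergence_of_hasFDerivAt_off_countable_of_equiv
    eL (fun x y => Iff.rfl) (EuclideanSpace.volume_preserving_symm_measurableEquiv_toLp (Fin 3))
    (fun i => pdR i f) (fun i x => fderiv ℝ (pdR i f) x) ∅ Set.countable_empty a b hle
    (fun i => (hpdC1 i).continuous.continuousOn)
    (fun x _ i => ((hpdC1 i).differentiable (by norm_num) x).hasFDerivAt)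
    (lapR f) (fun x => rfl) hInt
  -- simplify faces
  have hsets : ∀ i : Fin 3, Set.Icc (eL a ∘ i.succAbove) (eL b ∘ i.succAbove)
      = Set.Icc (fun _ => -L : Fin 2 → ℝ) (fun _ => L : Fin 2 → ℝ) := by
    intro i
    rw [ha, hb, eL.apply_symm_apply, eL.apply_symm_apply]
    rfl
  have haI : ∀ i : Fin 3, eL a i = -L := fun i => by rw [ha, eL.apply_symm_apply]
  have hbI : ∀ i : Fin 3, eL b i = L := fun i => by rw [hb, eL.apply_symm_apply]
  have hface : ∀ i : Fin 3,
      ((∫ x in Set.Icc (eL a ∘ i.succAbove) (eL b ∘ i.succAbove),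
          pdR i f (eL.symm (i.insertNth (eL b i) x))) -
        ∫ x in Set.Icc (eL a ∘ i.succAbove) (eL b ∘ i.succAbove),
          pdR i f (eL.symm (i.insertNth (eL a i) x)))
      = 4 * Real.pi * a₀ / 3 := by
    intro i
    rw [hsets i, haI i, hbI i]
    have hfront : ∀ x : Fin 2 → ℝ, pdR i f (eL.symm (i.insertNth L x))
        = a₀ * L / (Real.sqrt (L^2 + (x 0)^2 + (x 1)^2))^3 :=
      face_val R a₀ L hR hRL f hasymp i L (abs_of_pos hL)
    have hback : ∀ x : Fin 2 → ℝ, pdR i f (eL.symm (i.insertNth (-L) x))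
        = -(a₀ * L / (Real.sqrt (L^2 + (x 0)^2 + (x 1)^2))^3) := by
      intro x
      rw [face_val R a₀ L hR hRL f hasymp i (-L) (by rw [abs_neg, abs_of_pos hL]) x]
      ring
    simp only [hfront, hback]
    rw [integral_neg, sub_neg_eq_add]
    have hval : ∫ x in Set.Icc (fun _ => -L : Fin 2 → ℝ) (fun _ => L : Fin 2 → ℝ),
        a₀ * L / (Real.sqrt (L^2 + (x 0)^2 + (x 1)^2))^3 = a₀ * (2*Real.pi/3) := by
      have : ∀ x : Fin 2 → ℝ, a₀ * L / (Real.sqrt (L^2 + (x 0)^2 + (x 1)^2))^3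
          = a₀ * (L / (Real.sqrt (L^2 + (x 0)^2 + (x 1)^2))^3) := fun x => by ring
      simp only [this]
      rw [integral_const_mul, pi_face_integral L hL]
    rw [hval]; ring
  rw [funext hVf, integral_const_mul]
  have hwhole : ∫ x : E3, lapR f x = ∫ x in Set.Icc a b, lapR f x := by
    refine (setIntegral_eq_integral_of_forall_compl_eq_zero ?_).symm
    intro x hx
    apply hlap0
    by_contra hcon
    push_neg at hcon
    apply hx
    constructor
    · intro i
      show -L ≤ x i
      have := abs_apply_le_norm x i
      have h2 : |x i| ≤ R := le_trans this hcon
      have := abs_le.1 h2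
      linarith [this.1]
    · intro i
      show x i ≤ L
      have := abs_apply_le_norm x i
      have h2 : |x i| ≤ R := le_trans this hcon
      have := abs_le.1 h2
      linarith [this.2]
  rw [hwhole, hdiv, Finset.sum_congr rfl (fun i _ => hface i), Finset.sum_const]
  simp only [Finset.card_univ, Fintype.card_fin, nsmul_eq_mul]
  push_cast
  ring
end
end

section
/- There exists a universal constant C > 0 with the following property: for every measurable function V : ℝ³ → [0,∞) with α(V) := sup_{x∈ℝ³} |x|²V(x) + ∫_{ℝ³} V(x)/|x| dx < ∞, and for every x ∈ ℝ³, one has ∫_{ℝ³} V(y)/|x−y| dy ≤ C · α(V). -/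
noncomputable section
open MeasureTheory
open scoped ENNReal

open Set Metric


lemma finrank_E3 : Module.finrank ℝ E3 = 3 := by simp

lemma ball_lintegral (R : ℝ) (hR : 0 < R) :
    ∫⁻ y in Metric.ball (0:E3) R, ENNReal.ofReal ‖y‖⁻¹ ≤
      (volume (Metric.ball (0:E3) 1) + volume (Metric.ball (0:E3) 1))
        * ENNReal.ofReal (R^2) := by
  set ν := volume.restrict (Metric.ball (0:E3) R) with hν
  have hmeas : AEMeasurable (fun y : E3 => ‖y‖⁻¹) ν := by fun_prop
  have hnn : 0 ≤ᵐ[ν] (fun y : E3 => ‖y‖⁻¹) := by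
    filter_upwards with y; positivity
  rw [show (∫⁻ y in Metric.ball (0:E3) R, ENNReal.ofReal ‖y‖⁻¹)
      = ∫⁻ y, ENNReal.ofReal ‖y‖⁻¹ ∂ν from rfl,
    lintegral_eq_lintegral_meas_le ν hnn hmeas]
  have hRinv : (0:ℝ) < R⁻¹ := inv_pos.2 hR
  have h1 : ∫⁻ t in Ioc (0:ℝ) R⁻¹, ν {a | t ≤ ‖a‖⁻¹}
      ≤ volume (Metric.ball (0:E3) 1) * ENNReal.ofReal (R^2) := by
    calc ∫⁻ t in Ioc (0:ℝ) R⁻¹, ν {a | t ≤ ‖a‖⁻¹}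
        ≤ ∫⁻ _t in Ioc (0:ℝ) R⁻¹,
            ENNReal.ofReal (R^3) * volume (Metric.ball (0:E3) 1) := by
          refine setLIntegral_mono' measurableSet_Ioc fun t _ => ?_
          calc ν {a | t ≤ ‖a‖⁻¹} ≤ ν univ := measure_mono (subset_univ _)
          _ = volume (Metric.ball (0:E3) R) := by simp [hν]
          _ = ENNReal.ofReal (R^3) * volume (Metric.ball (0:E3) 1) := by
              rw [Measure.addHaar_ball _ _ hR.le, finrank_E3]
      _ = ENNReal.ofReal (R^3) * volume (Metric.ball (0:E3) 1)
            * ENNReal.ofReal R⁻¹ := by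
          rw [setLIntegral_const, Real.volume_Ioc, sub_zero]
      _ = volume (Metric.ball (0:E3) 1) * ENNReal.ofReal (R^2) := by
          rw [mul_comm (ENNReal.ofReal (R^3)), mul_assoc, ← ENNReal.ofReal_mul (by positivity)]
          congr 2
          field_simp
  have h2 : ∫⁻ t in Ioi R⁻¹, ν {a | t ≤ ‖a‖⁻¹}
      ≤ volume (Metric.ball (0:E3) 1) * ENNReal.ofReal (R^2) := by
    have hb : ∀ t ∈ Ioi R⁻¹, ν {a | t ≤ ‖a‖⁻¹}
        ≤ ENNReal.ofReal (t^(-3:ℝ)) * volume (Metric.ball (0:E3) 1) := by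
      intro t ht
      have ht0 : (0:ℝ) < t := hRinv.trans ht
      have hsub : {a : E3 | t ≤ ‖a‖⁻¹} ⊆ Metric.closedBall 0 t⁻¹ := by
        intro a ha
        simp only [mem_setOf_eq] at ha
        have hna : (0:ℝ) < ‖a‖ := by
          by_contra h
          push_neg at h
          have h0 : ‖a‖ = 0 := le_antisymm h (norm_nonneg a)
          rw [h0] at ha
          simp at ha
          linarith
        have : ‖a‖ ≤ t⁻¹ := by
          rw [← inv_inv ‖a‖]
          exact inv_anti₀ ht0 ha
        simpa [Metric.mem_closedBall, dist_zero_right] using this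
      calc ν {a | t ≤ ‖a‖⁻¹} ≤ volume {a : E3 | t ≤ ‖a‖⁻¹} :=
            Measure.restrict_le_self _
        _ ≤ volume (Metric.closedBall (0:E3) t⁻¹) := measure_mono hsub
        _ = ENNReal.ofReal (t⁻¹^3) * volume (Metric.ball (0:E3) 1) := by
            rw [Measure.addHaar_closedBall _ _ (by positivity), finrank_E3]
        _ = ENNReal.ofReal (t^(-3:ℝ)) * volume (Metric.ball (0:E3) 1) := by
            congr 1
            rw [show (-3:ℝ) = -(3:ℕ) by norm_num, Real.rpow_neg ht0.le,
              Real.rpow_natCast, inv_pow]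
    calc ∫⁻ t in Ioi R⁻¹, ν {a | t ≤ ‖a‖⁻¹}
        ≤ ∫⁻ t in Ioi R⁻¹,
            ENNReal.ofReal (t^(-3:ℝ)) * volume (Metric.ball (0:E3) 1) :=
          setLIntegral_mono' measurableSet_Ioi hb
      _ = (∫⁻ t in Ioi R⁻¹, ENNReal.ofReal (t^(-3:ℝ)))
            * volume (Metric.ball (0:E3) 1) :=
          lintegral_mul_const' _ _ measure_ball_lt_top.ne
      _ ≤ ENNReal.ofReal (R^2) * volume (Metric.ball (0:E3) 1) := by
          gcongr
          have hint : IntegrableOn (fun t : ℝ => t ^ (-3:ℝ)) (Ioi R⁻¹) :=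
            integrableOn_Ioi_rpow_of_lt (by norm_num) hRinv
          rw [← ofReal_integral_eq_lintegral_ofReal hint
            (by filter_upwards [ae_restrict_mem measurableSet_Ioi] with t ht;
                exact Real.rpow_nonneg (hRinv.trans ht).le _)]
          apply ENNReal.ofReal_le_ofReal
          rw [integral_Ioi_rpow_of_lt (by norm_num) hRinv]
          have h4 : (R⁻¹) ^ ((-3:ℝ) + 1) = R ^ 2 := by
            rw [show (-3:ℝ)+1 = -(2:ℕ) by norm_num, Real.rpow_neg (by positivity),
              Real.rpow_natCast, inv_pow, inv_inv]
          rw [h4]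
          have h5 : -R ^ 2 / (-3 + 1) = R ^ 2 / 2 := by ring
          rw [h5]
          linarith [sq_nonneg R]
      _ = volume (Metric.ball (0:E3) 1) * ENNReal.ofReal (R^2) := mul_comm _ _
  calc ∫⁻ t in Ioi (0:ℝ), ν {a | t ≤ ‖a‖⁻¹}
      ≤ ∫⁻ t in Ioc (0:ℝ) R⁻¹ ∪ Ioi R⁻¹, ν {a | t ≤ ‖a‖⁻¹} :=
        lintegral_mono_set Ioi_subset_Ioc_union_Ioi
    _ ≤ (∫⁻ t in Ioc (0:ℝ) R⁻¹, ν {a | t ≤ ‖a‖⁻¹})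
          + ∫⁻ t in Ioi R⁻¹, ν {a | t ≤ ‖a‖⁻¹} := lintegral_union_le _ _ _
    _ ≤ volume (Metric.ball (0:E3) 1) * ENNReal.ofReal (R^2)
          + volume (Metric.ball (0:E3) 1) * ENNReal.ofReal (R^2) := add_le_add h1 h2
    _ = _ := (add_mul _ _ _).symm

lemma translate_lintegral (x : E3) (R : ℝ) :
    ∫⁻ y in Metric.ball x R, ENNReal.ofReal ‖x - y‖⁻¹
      = ∫⁻ z in Metric.ball (0:E3) R, ENNReal.ofReal ‖z‖⁻¹ := by
  have hmp : MeasurePreserving (fun y : E3 => x - y) volume volume :=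
    Measure.measurePreserving_sub_left volume x
  have hg : Measurable fun z : E3 =>
      (Metric.ball (0:E3) R).indicator (fun z => ENNReal.ofReal ‖z‖⁻¹) z :=
    (Measurable.ennreal_ofReal (by fun_prop)).indicator measurableSet_ball
  rw [← lintegral_indicator measurableSet_ball, ← lintegral_indicator measurableSet_ball,
    ← hmp.lintegral_comp hg]
  congr 1
  funext y
  by_cases h : y ∈ Metric.ball x R
  · have h' : x - y ∈ Metric.ball (0:E3) R := by
      simp only [mem_ball, dist_eq_norm, sub_zero] at h ⊢
      rwa [norm_sub_rev] at h
    simp [Set.indicator_of_mem h, Set.indicator_of_mem h']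
  · have h' : x - y ∉ Metric.ball (0:E3) R := by
      simp only [mem_ball, dist_eq_norm, sub_zero] at h ⊢
      rwa [norm_sub_rev] at h
    simp [Set.indicator_of_notMem h, Set.indicator_of_notMem h']

/-- There is a universal constant `C > 0` such that for every nonnegative measurable
potential `V` on ℝ³ with `α = sup_x |x|²V(x) + ∫ V(x)/|x| dx < ∞`, one has
`∫ V(y)/|x-y| dy ≤ C α` for every `x`. -/
theorem newton_potential_bound :
    ∃ C : ℝ, 0 < C ∧
      ∀ V : E3 → ℝ, Measurable V → (∀ x : E3, 0 ≤ V x) →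
      ∀ α : ℝ≥0∞,
        α = (⨆ x : E3, ENNReal.ofReal (‖x‖^2 * V x))
            + ∫⁻ x : E3, ENNReal.ofReal (V x / ‖x‖) →
        α < ⊤ →
        ∀ x : E3,
          ∫⁻ y : E3, ENNReal.ofReal (V y / ‖x - y‖) ≤ ENNReal.ofReal C * α := by
  classical
  set B : ℝ≥0∞ := volume (Metric.ball (0:E3) 1) with hB
  set K : ℝ≥0∞ := B + B with hK
  have hKtop : K ≠ ⊤ := by
    simp only [hK, hB, Ne, ENNReal.add_eq_top, not_or]
    exact ⟨measure_ball_lt_top.ne, measure_ball_lt_top.ne⟩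
  set C : ℝ := 2 + (9/4) * K.toReal with hC
  have hCpos : 0 < C := by
    have : 0 ≤ K.toReal := ENNReal.toReal_nonneg
    positivity
  have hC2 : (2:ℝ≥0∞) ≤ ENNReal.ofReal C := by
    rw [show (2:ℝ≥0∞) = ENNReal.ofReal 2 by norm_num]
    apply ENNReal.ofReal_le_ofReal
    have h : 0 ≤ (9/4) * K.toReal := by positivity
    rw [hC]
    linarith
  have hCK : ENNReal.ofReal (9/4) * K ≤ ENNReal.ofReal C := by
    calc ENNReal.ofReal (9/4) * K = ENNReal.ofReal (9/4) * ENNReal.ofReal K.toReal := by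
          rw [ENNReal.ofReal_toReal hKtop]
      _ = ENNReal.ofReal ((9/4) * K.toReal) := by
          rw [ENNReal.ofReal_mul (by norm_num)]
      _ ≤ ENNReal.ofReal C := ENNReal.ofReal_le_ofReal (by linarith)
  refine ⟨C, hCpos, ?_⟩
  intro V hV hV0 α hα hαtop x
  set S : ℝ≥0∞ := ⨆ y : E3, ENNReal.ofReal (‖y‖^2 * V y) with hS
  set I : ℝ≥0∞ := ∫⁻ y : E3, ENNReal.ofReal (V y / ‖y‖) with hI
  have hα' : α = S + I := hα
  have hIα : I ≤ α := by rw [hα']; exact le_add_self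
  have hSα : S ≤ α := by rw [hα']; exact le_self_add
  have hStop : S ≠ ⊤ := (lt_of_le_of_lt hSα hαtop).ne
  have hmI : Measurable fun y : E3 => ENNReal.ofReal (V y / ‖y‖) :=
    (hV.div measurable_norm).ennreal_ofReal
  by_cases hx : x = 0
  · subst hx
    have heq : ∀ y : E3, ENNReal.ofReal (V y / ‖(0:E3) - y‖) = ENNReal.ofReal (V y / ‖y‖) := by
      intro y; rw [zero_sub, norm_neg]
    calc ∫⁻ y : E3, ENNReal.ofReal (V y / ‖(0:E3) - y‖) = I := by
          simp_rw [heq]; rfl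
      _ ≤ 1 * α := by rw [one_mul]; exact hIα
      _ ≤ ENNReal.ofReal C * α := by
          gcongr
          rw [ENNReal.one_le_ofReal, hC]
          have h : 0 ≤ (9/4) * K.toReal := by positivity
          linarith
  · have hR : 0 < ‖x‖ := norm_pos_iff.mpr hx
    set R : ℝ := ‖x‖ with hRdef
    set g : E3 → ℝ≥0∞ := fun y =>
      2 * ENNReal.ofReal (V y / ‖y‖) +
        (Metric.ball x R).indicator
          (fun y => ENNReal.ofReal (9/(4*R^2)) * S * ENNReal.ofReal ‖x - y‖⁻¹) y with hg
    have h0 : ∀ᵐ y : E3, y ≠ (0:E3) := by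
      rw [ae_iff]
      simp only [ne_eq, not_not, Set.setOf_eq_eq_singleton]
      exact measure_singleton 0
    have hptwise : ∀ᵐ y : E3, ENNReal.ofReal (V y / ‖x - y‖) ≤ g y := by
      filter_upwards [h0] with y hy
      have hny : (0:ℝ) < ‖y‖ := norm_pos_iff.mpr hy
      by_cases hcase : ‖y‖ ≤ 2 * ‖x - y‖
      · have hxy : (0:ℝ) < ‖x - y‖ := by linarith
        have hle : V y / ‖x - y‖ ≤ 2 * (V y / ‖y‖) := by
          rw [mul_div_assoc' 2 (V y) ‖y‖, div_le_div_iff₀ hxy hny]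
          nlinarith [hV0 y]
        calc ENNReal.ofReal (V y / ‖x - y‖) ≤ ENNReal.ofReal (2 * (V y / ‖y‖)) :=
              ENNReal.ofReal_le_ofReal hle
          _ = 2 * ENNReal.ofReal (V y / ‖y‖) := by
              rw [ENNReal.ofReal_mul (by norm_num)]; norm_num
          _ ≤ g y := self_le_add_right _ _
      · push_neg at hcase
        have t1 : ‖y‖ ≤ ‖x‖ + ‖x - y‖ := by
          have := norm_sub_le x (x - y)
          simpa using this
        have t2 : ‖x‖ ≤ ‖x - y‖ + ‖y‖ := by
          have := norm_add_le (x - y) y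
          simpa using this
        have hxy : ‖x - y‖ < ‖x‖ := by linarith
        have hmem : y ∈ Metric.ball x R := by
          rw [Metric.mem_ball, dist_eq_norm, ← norm_sub_rev]
          exact hxy
        have h23 : 2 * ‖x‖ < 3 * ‖y‖ := by linarith
        have key : V y / ‖x - y‖ ≤ 9/(4*R^2) * (‖y‖^2 * V y) * ‖x - y‖⁻¹ := by
          rcases eq_or_lt_of_le (norm_nonneg (x - y)) with h|h
          · rw [← h]
            simp
          · rw [div_eq_mul_inv]
            apply mul_le_mul_of_nonneg_right _ (by positivity)
            rw [div_mul_eq_mul_div, le_div_iff₀ (by positivity), hRdef]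
            have h4 : 4*‖x‖^2 ≤ 9*‖y‖^2 := by nlinarith [norm_nonneg x, norm_nonneg y]
            nlinarith [mul_nonneg (hV0 y) (by linarith : (0:ℝ) ≤ 9*‖y‖^2 - 4*‖x‖^2)]
        calc ENNReal.ofReal (V y / ‖x - y‖)
            ≤ ENNReal.ofReal (9/(4*R^2) * (‖y‖^2 * V y) * ‖x - y‖⁻¹) :=
              ENNReal.ofReal_le_ofReal key
          _ = ENNReal.ofReal (9/(4*R^2)) * ENNReal.ofReal (‖y‖^2 * V y)
                * ENNReal.ofReal ‖x - y‖⁻¹ := by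
              rw [ENNReal.ofReal_mul
                  (mul_nonneg (by positivity) (mul_nonneg (sq_nonneg _) (hV0 y))),
                ENNReal.ofReal_mul (by positivity)]
          _ ≤ ENNReal.ofReal (9/(4*R^2)) * S * ENNReal.ofReal ‖x - y‖⁻¹ := by
              gcongr
              exact le_iSup (fun z : E3 => ENNReal.ofReal (‖z‖^2 * V z)) y
          _ = (Metric.ball x R).indicator
                (fun y => ENNReal.ofReal (9/(4*R^2)) * S * ENNReal.ofReal ‖x - y‖⁻¹) y := by
              rw [Set.indicator_of_mem hmem]
          _ ≤ g y := le_add_self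
    have hmInd : Measurable fun y : E3 =>
        (Metric.ball x R).indicator
          (fun y => ENNReal.ofReal (9/(4*R^2)) * S * ENNReal.ofReal ‖x - y‖⁻¹) y := by
      apply Measurable.indicator _ measurableSet_ball
      fun_prop
    calc ∫⁻ y : E3, ENNReal.ofReal (V y / ‖x - y‖) ≤ ∫⁻ y, g y := lintegral_mono_ae hptwise
      _ = 2 * I + ∫⁻ y, (Metric.ball x R).indicator
            (fun y => ENNReal.ofReal (9/(4*R^2)) * S * ENNReal.ofReal ‖x - y‖⁻¹) y := by
          rw [hg, lintegral_add_left (by fun_prop), lintegral_const_mul 2 hmI]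
      _ = 2 * I + ENNReal.ofReal (9/(4*R^2)) * S
            * ∫⁻ y in Metric.ball x R, ENNReal.ofReal ‖x - y‖⁻¹ := by
          rw [lintegral_indicator measurableSet_ball,
            lintegral_const_mul' _ _ (ENNReal.mul_ne_top ENNReal.ofReal_ne_top hStop)]
      _ ≤ 2 * I + ENNReal.ofReal (9/(4*R^2)) * S * (K * ENNReal.ofReal (R^2)) := by
          gcongr
          rw [translate_lintegral x R]
          exact ball_lintegral R hR
      _ = 2 * I + ENNReal.ofReal (9/4) * K * S := by
          congr 1
          rw [show ENNReal.ofReal (9/(4*R^2)) * S * (K * ENNReal.ofReal (R^2))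
              = (ENNReal.ofReal (9/(4*R^2)) * ENNReal.ofReal (R^2)) * (K * S) by ring,
            ← ENNReal.ofReal_mul (by positivity),
            show 9/(4*R^2)*R^2 = 9/4 by field_simp]
          ring
      _ ≤ ENNReal.ofReal C * I + ENNReal.ofReal C * S := by
          exact add_le_add (mul_le_mul_left hC2 I) (mul_le_mul_left hCK S)
      _ = ENNReal.ofReal C * α := by rw [hα']; ring
end
end

section
/- There exists a universal constant C > 0 with the following property: let V : ℝ³ → [0,∞) be measurable with α(V) := sup_{x∈ℝ³} |x|²V(x) + ∫_{ℝ³} V(x)/|x| dx < ∞, and let f : ℝ³ → ℝ be measurable with 0 ≤ f(x) ≤ 1 for all x and satisfying the Born-series (Newtonian potential) representation f(x) = 1 − (1/(8π)) ∫_{ℝ³} V(y) f(y) / |x−y| dy for every x ∈ ℝ³. Then 1 − C·α(V) ≤ f(x) ≤ 1 for every x ∈ ℝ³. -/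
noncomputable section
open MeasureTheory
open scoped ENNReal

open Metric in
/-- Dyadic bound for the Riesz potential of order 1 over a ball centered at the origin. -/
lemma lint_ball_origin (R : ℝ) :
    ∫⁻ z in ball (0:E3) R, ENNReal.ofReal ‖z‖⁻¹ ≤
      ENNReal.ofReal (R^2) * (4 * volume (ball (0:E3) 1)) := by
  rcases le_or_gt R 0 with hR | hR
  · rw [ball_eq_empty.2 hR]; simp
  · set B := volume (ball (0:E3) 1) with hB
    set A : ℕ → Set E3 := fun k => ball (0:E3) (R * 2⁻¹^k) \ ball (0:E3) (R * 2⁻¹^(k+1))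
      with hA
    have cover : ball (0:E3) R ⊆ {0} ∪ ⋃ k : ℕ, A k := by
      intro z hz
      rcases eq_or_ne z 0 with rfl | hz0
      · exact Or.inl rfl
      · right
        have hzpos : 0 < ‖z‖ := norm_pos_iff.2 hz0
        have hzR : ‖z‖ < R := by simpa using mem_ball_zero_iff.1 hz
        have hex : ∃ m : ℕ, R * 2⁻¹^m ≤ ‖z‖ := by
          obtain ⟨m, hm⟩ := exists_pow_lt_of_lt_one (div_pos hzpos hR)
            (by norm_num : (2:ℝ)⁻¹ < 1)
          exact ⟨m, by rw [mul_comm, ← le_div_iff₀ hR]; exact hm.le⟩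
        classical
        have hm0 : Nat.find hex ≠ 0 := by
          intro h
          have hsp := Nat.find_spec hex
          rw [h, pow_zero, mul_one] at hsp
          linarith
        obtain ⟨k, hk⟩ := Nat.exists_eq_succ_of_ne_zero hm0
        have hmk : R * 2⁻¹^(k+1) ≤ ‖z‖ := by
          have hsp := Nat.find_spec hex
          rw [hk] at hsp
          exact hsp
        have hklt : ¬ (R * 2⁻¹^k ≤ ‖z‖) :=
          Nat.find_min hex (by rw [hk]; exact Nat.lt_succ_self k)
        exact Set.mem_iUnion.2 ⟨k, mem_ball_zero_iff.2 (lt_of_not_ge hklt),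
          fun hmem => absurd (mem_ball_zero_iff.1 hmem) (not_lt.2 hmk)⟩
    have hAk : ∀ k : ℕ, ∫⁻ z in A k, ENNReal.ofReal ‖z‖⁻¹ ≤
        ENNReal.ofReal (2 * R^2) * (ENNReal.ofReal 2⁻¹)^k * B := by
      intro k
      have hrpos : (0:ℝ) < R * 2⁻¹^(k+1) := by positivity
      have hbound : ∀ z ∈ A k, ENNReal.ofReal ‖z‖⁻¹ ≤
          ENNReal.ofReal (R * 2⁻¹^(k+1))⁻¹ := by
        intro z hz
        apply ENNReal.ofReal_le_ofReal
        have hz2 : R * 2⁻¹^(k+1) ≤ ‖z‖ := by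
          by_contra hcon
          exact hz.2 (mem_ball_zero_iff.2 (lt_of_not_ge hcon))
        exact inv_anti₀ hrpos hz2
      calc ∫⁻ z in A k, ENNReal.ofReal ‖z‖⁻¹
          ≤ ∫⁻ _ in A k, ENNReal.ofReal (R * 2⁻¹^(k+1))⁻¹ :=
            setLIntegral_mono measurable_const hbound
        _ = ENNReal.ofReal (R * 2⁻¹^(k+1))⁻¹ * volume (A k) := setLIntegral_const _ _
        _ ≤ ENNReal.ofReal (R * 2⁻¹^(k+1))⁻¹ * volume (ball (0:E3) (R * 2⁻¹^k)) := by
            gcongr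
            exact Set.diff_subset
        _ = ENNReal.ofReal (R * 2⁻¹^(k+1))⁻¹ *
              (ENNReal.ofReal ((R * 2⁻¹^k) ^ 3) * B) := by
            rw [Measure.addHaar_ball volume _ (by positivity : (0:ℝ) ≤ R * 2⁻¹^k),
              finrank_euclideanSpace_fin]
        _ = ENNReal.ofReal ((R * 2⁻¹^(k+1))⁻¹ * (R * 2⁻¹^k) ^ 3) * B := by
            rw [ENNReal.ofReal_mul (by positivity), mul_assoc]
        _ ≤ ENNReal.ofReal (2 * R^2 * 2⁻¹^k) * B := by
            refine mul_le_mul_left (ENNReal.ofReal_le_ofReal ?_) B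
            have h1 : (R * 2⁻¹^(k+1))⁻¹ * (R * 2⁻¹^k) ^ 3
                = 2 * R^2 * (2⁻¹^k)^2 := by
              field_simp
              ring
            rw [h1]
            have h2 : ((2:ℝ)⁻¹^k)^2 ≤ 2⁻¹^k := by
              have : (2:ℝ)⁻¹^k ≤ 1 := pow_le_one₀ (by norm_num) (by norm_num)
              nlinarith [pow_pos (by norm_num : (0:ℝ) < 2⁻¹) k]
            nlinarith [sq_nonneg R]
        _ = ENNReal.ofReal (2 * R^2) * (ENNReal.ofReal 2⁻¹)^k * B := by
            rw [ENNReal.ofReal_mul (by positivity), ENNReal.ofReal_pow (by norm_num)]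
    calc ∫⁻ z in ball (0:E3) R, ENNReal.ofReal ‖z‖⁻¹
        ≤ ∫⁻ z in ({0} ∪ ⋃ k : ℕ, A k), ENNReal.ofReal ‖z‖⁻¹ :=
          lintegral_mono_set cover
      _ ≤ (∫⁻ z in ({(0:E3)} : Set E3), ENNReal.ofReal ‖z‖⁻¹) +
            ∫⁻ z in (⋃ k : ℕ, A k), ENNReal.ofReal ‖z‖⁻¹ :=
          lintegral_union_le _ _ _
      _ ≤ 0 + ∑' k : ℕ, ∫⁻ z in A k, ENNReal.ofReal ‖z‖⁻¹ := by
          gcongr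
          · exact le_of_eq (setLIntegral_measure_zero _ _ (measure_singleton 0))
          · exact lintegral_iUnion_le _ _
      _ ≤ 0 + ∑' k : ℕ, ENNReal.ofReal (2 * R^2) * (ENNReal.ofReal 2⁻¹)^k * B := by
          gcongr with k
          exact hAk k
      _ = ENNReal.ofReal (2 * R^2) * (∑' k : ℕ, (ENNReal.ofReal 2⁻¹)^k) * B := by
          rw [zero_add, ENNReal.tsum_mul_right, ENNReal.tsum_mul_left]
      _ ≤ ENNReal.ofReal (R^2) * (4 * B) := by
          have h2 : (ENNReal.ofReal 2⁻¹) = (2:ℝ≥0∞)⁻¹ := by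
            rw [ENNReal.ofReal_inv_of_pos (by norm_num)]
            norm_num
          have h3 : ENNReal.ofReal (2 * R^2) = 2 * ENNReal.ofReal (R^2) := by
            rw [ENNReal.ofReal_mul (by norm_num)]
            norm_num
          rw [h2, ENNReal.tsum_geometric, ENNReal.one_sub_inv_two, inv_inv, h3]
          apply le_of_eq
          ring

open Metric in
/-- Translated version: Riesz potential over a ball centered at `x`. -/
lemma lint_ball_shift (x : E3) (R : ℝ) :
    ∫⁻ y in ball x R, ENNReal.ofReal ‖x - y‖⁻¹ ≤
      ENNReal.ofReal (R^2) * (4 * volume (ball (0:E3) 1)) := by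
  have hmp : MeasurePreserving (fun z : E3 => x - z) volume volume :=
    Measure.measurePreserving_sub_left volume x
  have hemb : MeasurableEmbedding (fun z : E3 => x - z) :=
    (Homeomorph.subLeft x).measurableEmbedding
  have hpre : (fun z : E3 => x - z) ⁻¹' (ball (0:E3) R) = ball x R := by
    ext y
    simp only [Set.mem_preimage, mem_ball, dist_eq_norm, norm_sub_rev, sub_zero]
  have := hmp.setLIntegral_comp_preimage_emb hemb
    (fun z => ENNReal.ofReal ‖z‖⁻¹) (ball (0:E3) R)
  rw [hpre] at this
  rw [this]
  exact lint_ball_origin R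

/-- From a bound on the lintegral of a nonnegative function we get integrability
and a bound on the Bochner integral. -/
lemma integrable_and_integral_le {g : E3 → ℝ} (hg : Measurable g) (h0 : ∀ y, 0 ≤ g y)
    {M : ℝ≥0∞} (hM : M ≠ ⊤) (hle : ∫⁻ y, ENNReal.ofReal (g y) ≤ M) :
    Integrable g ∧ ∫ y, g y ≤ M.toReal := by
  have h0' : 0 ≤ᵐ[volume] g := Filter.Eventually.of_forall h0
  constructor
  · refine ⟨hg.aestronglyMeasurable, ?_⟩
    rw [hasFiniteIntegral_iff_ofReal h0']
    exact lt_of_le_of_lt hle hM.lt_top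
  · rw [integral_eq_lintegral_of_nonneg_ae h0' hg.aestronglyMeasurable]
    exact ENNReal.toReal_mono hM hle

set_option maxHeartbeats 1600000 in
/-- There is a universal constant `C > 0` such that: if `V ≥ 0` is measurable with
`α = sup_x |x|²V(x) + ∫ V(x)/|x| dx < ∞` and `f` with `0 ≤ f ≤ 1` satisfies the
Born-series representation `f(x) = 1 - (1/8π) ∫ V(y)f(y)/|x-y| dy`, then
`1 - Cα ≤ f ≤ 1` everywhere. -/
theorem scattering_solution_bounds :
    ∃ C : ℝ, 0 < C ∧
      ∀ V : E3 → ℝ, Measurable V → (∀ x : E3, 0 ≤ V x) →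
      BddAbove (Set.range fun x : E3 => ‖x‖^2 * V x) →
      Integrable (fun x : E3 => V x / ‖x‖) →
      ∀ α : ℝ,
        α = sSup (Set.range fun x : E3 => ‖x‖^2 * V x) + ∫ x : E3, V x / ‖x‖ →
      ∀ f : E3 → ℝ, Measurable f → (∀ x : E3, 0 ≤ f x ∧ f x ≤ 1) →
        (∀ x : E3, f x = 1 - (1/(8 * Real.pi)) * ∫ y : E3, V y * f y / ‖x - y‖) →
        ∀ x : E3, 1 - C * α ≤ f x ∧ f x ≤ 1 := by
  classical
  set B' : ℝ := (volume (Metric.ball (0:E3) 1)).toReal with hB'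
  have hB'0 : 0 ≤ B' := ENNReal.toReal_nonneg
  refine ⟨(2 + 16 * B') / (8 * Real.pi), by positivity, ?_⟩
  intro V hVm hV hbdd hVint α hα f hfm hf01 hrep x
  refine ⟨?_, (hf01 x).2⟩
  set S : ℝ := sSup (Set.range fun x : E3 => ‖x‖^2 * V x) with hSdef
  have hS : ∀ y : E3, ‖y‖^2 * V y ≤ S := fun y => le_csSup hbdd ⟨y, rfl⟩
  have hS0 : 0 ≤ S := by
    have := hS 0
    simpa using this
  set I : ℝ := ∫ y : E3, V y / ‖y‖ with hIdef
  have hI0 : 0 ≤ I := integral_nonneg fun y => div_nonneg (hV y) (norm_nonneg y)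
  -- the singular majorant
  set c : ℝ := 4 * S / ‖x‖^2 with hcdef
  have hc0 : 0 ≤ c := by positivity
  set h2 : E3 → ℝ := (Metric.ball x ‖x‖).indicator (fun y => c * ‖x - y‖⁻¹) with hh2def
  have hm2 : Measurable h2 :=
    (measurable_const.mul ((measurable_const.sub measurable_id).norm.inv)).indicator
      measurableSet_ball
  have hh2nn : ∀ y, 0 ≤ h2 y := fun y =>
    Set.indicator_nonneg (fun y _ => by positivity) y
  have hBfin : volume (Metric.ball (0:E3) 1) ≠ ⊤ := measure_ball_lt_top.ne
  set M : ℝ≥0∞ :=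
    ENNReal.ofReal c * (ENNReal.ofReal (‖x‖^2) * (4 * volume (Metric.ball (0:E3) 1)))
    with hMdef
  have hMfin : M ≠ ⊤ := by
    rw [hMdef]
    exact ENNReal.mul_ne_top ENNReal.ofReal_ne_top
      (ENNReal.mul_ne_top ENNReal.ofReal_ne_top
        (ENNReal.mul_ne_top (by norm_num) hBfin))
  have hlint2 : ∫⁻ y, ENNReal.ofReal (h2 y) ≤ M := by
    have heq : ∀ y, ENNReal.ofReal (h2 y) =
        (Metric.ball x ‖x‖).indicator (fun y => ENNReal.ofReal (c * ‖x - y‖⁻¹)) y := by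
      intro y
      rw [hh2def]
      by_cases hy : y ∈ Metric.ball x ‖x‖
      · rw [Set.indicator_of_mem hy, Set.indicator_of_mem hy]
      · rw [Set.indicator_of_notMem hy, Set.indicator_of_notMem hy, ENNReal.ofReal_zero]
    calc ∫⁻ y, ENNReal.ofReal (h2 y)
        = ∫⁻ y in Metric.ball x ‖x‖, ENNReal.ofReal (c * ‖x - y‖⁻¹) := by
          simp_rw [heq]
          rw [lintegral_indicator measurableSet_ball]
      _ = ∫⁻ y in Metric.ball x ‖x‖, ENNReal.ofReal c * ENNReal.ofReal ‖x - y‖⁻¹ := by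
          congr 1
          ext y
          rw [ENNReal.ofReal_mul hc0]
      _ = ENNReal.ofReal c * ∫⁻ y in Metric.ball x ‖x‖, ENNReal.ofReal ‖x - y‖⁻¹ :=
          lintegral_const_mul _ ((measurable_const.sub measurable_id).norm.inv.ennreal_ofReal)
      _ ≤ M := by
          rw [hMdef]
          gcongr
          exact lint_ball_shift x ‖x‖
  obtain ⟨hInt2, hIle2⟩ := integrable_and_integral_le hm2 hh2nn hMfin hlint2
  have hIle2' : ∫ y, h2 y ≤ 16 * B' * S := by
    refine le_trans hIle2 ?_
    have hMre : M.toReal = c * (‖x‖^2 * (4 * B')) := by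
      rw [hMdef, ENNReal.toReal_mul, ENNReal.toReal_mul, ENNReal.toReal_mul,
        ENNReal.toReal_ofReal hc0, ENNReal.toReal_ofReal (by positivity)]
      norm_num [hB']
    rw [hMre]
    rcases eq_or_lt_of_le (norm_nonneg x) with hx0 | hx0
    · rw [← hx0]
      norm_num
      positivity
    · have heq : c * (‖x‖^2 * (4 * B')) = 16 * B' * S := by
        rw [hcdef]
        field_simp
        ring
      rw [heq]
  -- the regular majorant
  have hInt1 : Integrable (fun y : E3 => 2 * (V y / ‖y‖)) := hVint.const_mul 2
  have hIeq1 : ∫ y : E3, 2 * (V y / ‖y‖) = 2 * I := by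
    rw [hIdef, integral_const_mul]
  -- a.e. pointwise bound
  have hae : ∀ᵐ y : E3, V y * f y / ‖x - y‖ ≤ 2 * (V y / ‖y‖) + h2 y := by
    have hne : ∀ᵐ y : E3, y ≠ 0 := by
      refine ae_iff.mpr ?_
      have hset : {y : E3 | ¬ y ≠ 0} = {0} := by ext y; simp
      rw [hset]
      exact measure_singleton 0
    filter_upwards [hne] with y hy0
    have hyn : 0 < ‖y‖ := norm_pos_iff.2 hy0
    have hf0 := (hf01 y).1
    have hf1 := (hf01 y).2
    have hV0 := hV y
    have hh1nn : 0 ≤ 2 * (V y / ‖y‖) := by positivity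
    rcases le_or_gt (‖y‖/2) ‖x - y‖ with hcase | hcase
    · have hxy : 0 < ‖x - y‖ := lt_of_lt_of_le (by linarith) hcase
      have key : V y * f y / ‖x - y‖ ≤ 2 * (V y / ‖y‖) := by
        rw [div_le_iff₀ hxy]
        have hdm : V y / ‖y‖ * ‖y‖ = V y := div_mul_cancel₀ _ hyn.ne'
        have hprod : 0 ≤ (V y / ‖y‖) * (‖x - y‖ - ‖y‖/2) :=
          mul_nonneg (div_nonneg hV0 hyn.le) (by linarith)
        have hfV : 0 ≤ (1 - f y) * V y := mul_nonneg (by linarith) hV0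
        nlinarith [hdm, hprod, hfV]
      linarith [hh2nn y]
    · rcases eq_or_ne (x - y) 0 with hxy0 | hxy0
      · rw [hxy0, norm_zero, div_zero]
        exact add_nonneg hh1nn (hh2nn y)
      · have hxy : 0 < ‖x - y‖ := norm_pos_iff.2 hxy0
        have htri1 : ‖y‖ ≤ ‖x‖ + ‖x - y‖ := by
          have h := norm_sub_le x (x - y)
          have heq : x - (x - y) = y := by abel
          rw [heq] at h
          linarith
        have hx0 : 0 < ‖x‖ := by linarith
        have htri2 : ‖x‖ ≤ ‖y‖ + ‖x - y‖ := by
          have h := norm_add_le y (x - y)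
          have heq : y + (x - y) = x := by abel
          rw [heq] at h
          linarith
        have hmem : y ∈ Metric.ball x ‖x‖ := by
          rw [Metric.mem_ball, dist_eq_norm, norm_sub_rev]
          linarith
        have hVy : V y * ‖y‖^2 ≤ S := by
          have := hS y; nlinarith
        have hx32 : ‖x‖ < 3/2 * ‖y‖ := by linarith
        have hxsq : ‖x‖^2 ≤ 9/4 * ‖y‖^2 := by
          nlinarith [hx32, hx0, hyn]
        have hkey : V y * f y ≤ c := by
          rw [hcdef, le_div_iff₀ (by positivity)]
          have hp1 : 0 ≤ (1 - f y) * V y * ‖x‖^2 :=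
            mul_nonneg (mul_nonneg (by linarith) hV0) (sq_nonneg _)
          have hp2 : 0 ≤ V y * (9/4 * ‖y‖^2 - ‖x‖^2) := mul_nonneg hV0 (by linarith)
          nlinarith [hVy, hp1, hp2, hS0]
        have key : V y * f y / ‖x - y‖ ≤ c * ‖x - y‖⁻¹ := by
          rw [div_eq_mul_inv]
          exact mul_le_mul_of_nonneg_right hkey (by positivity)
        have hind : h2 y = c * ‖x - y‖⁻¹ := Set.indicator_of_mem hmem _
        rw [hind]
        linarith
  -- put things together
  have hg0 : 0 ≤ᵐ[volume] fun y : E3 => V y * f y / ‖x - y‖ :=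
    Filter.Eventually.of_forall fun y =>
      div_nonneg (mul_nonneg (hV y) (hf01 y).1) (norm_nonneg _)
  have hJ : ∫ y : E3, V y * f y / ‖x - y‖ ≤ 2 * I + 16 * B' * S := by
    calc ∫ y : E3, V y * f y / ‖x - y‖
        ≤ ∫ y : E3, (2 * (V y / ‖y‖) + h2 y) :=
          integral_mono_of_nonneg hg0 (hInt1.add hInt2) hae
      _ = (∫ y : E3, 2 * (V y / ‖y‖)) + ∫ y, h2 y := integral_add hInt1 hInt2
      _ ≤ 2 * I + 16 * B' * S := by rw [hIeq1]; linarith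
  have hpi : 0 < Real.pi := Real.pi_pos
  have halpha : α = S + I := hα
  have hbound : (1/(8 * Real.pi)) * ∫ y : E3, V y * f y / ‖x - y‖ ≤
      (2 + 16 * B') / (8 * Real.pi) * α := by
    have h1 : 2 * I + 16 * B' * S ≤ (2 + 16 * B') * α := by
      rw [halpha]; nlinarith
    calc (1/(8 * Real.pi)) * ∫ y : E3, V y * f y / ‖x - y‖
        ≤ (1/(8 * Real.pi)) * ((2 + 16 * B') * α) := by
          apply mul_le_mul_of_nonneg_left (le_trans hJ h1) (by positivity)
      _ = (2 + 16 * B') / (8 * Real.pi) * α := by ring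
  rw [hrep x]
  linarith
end
end

section
/- Let V : ℝ³ → [0,∞) be continuous, bounded, and even (V(−x) = V(x)). Let N ≥ 2 and let ψ ∈ C_c^∞((ℝ³)^N; ℂ). For j ∈ {1,…,N} define h_jψ(x) := −Δ_j ψ(x) + (1/2) Σ_{k≠j} V(x_j − x_k) ψ(x). Then Re ∫_{(ℝ³)^N} conj(h_1ψ(x)) · h_2ψ(x) dx ≥ Re ∫_{(ℝ³)^N} conj( −Δ_1ψ(x) + (1/2)V(x_1 − x_2)ψ(x) ) · ( −Δ_2ψ(x) + (1/2)V(x_1 − x_2)ψ(x) ) dx. That is, using the nonnegativity of the potential, all interaction terms not involving the pair (x_1, x_2) may be discarded in the lower bound for the cross term. -/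
noncomputable section
open MeasureTheory

/-- partial derivative of a multi-particle wave function in particle `i`, coordinate `a` -/
def pd {N : ℕ} (i : Fin N) (a : Fin 3) (φ : (Fin N → E3) → ℂ) (x : Fin N → E3) : ℂ :=
  fderiv ℝ φ x (Pi.single i (EuclideanSpace.single a 1))

/-- Laplacian in the variable of particle `i` -/
def lapI {N : ℕ} (i : Fin N) (φ : (Fin N → E3) → ℂ) (x : Fin N → E3) : ℂ :=
  ∑ a : Fin 3, pd i a (pd i a φ) x

/-- the one-body piece `h_j ψ = -Δ_j ψ + ½ Σ_{k≠j} V(x_j - x_k) ψ` of the Hamiltonian -/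
def hOp {N : ℕ} (V : E3 → ℝ) (j : Fin N) (ψ : (Fin N → E3) → ℂ) (x : Fin N → E3) : ℂ :=
  -lapI j ψ x + (1/2) * ((∑ k ∈ Finset.univ.erase j, V (x j - x k) : ℝ) : ℂ) * ψ x

instance haarPi (N : ℕ) : (volume : Measure (Fin N → E3)).IsAddHaarMeasure :=
  MeasureTheory.Measure.pi.isAddHaarMeasure _

variable {N : ℕ}

lemma contDiff_pd (i : Fin N) (a : Fin 3) {ψ : (Fin N → E3) → ℂ}
    (hψ : ContDiff ℝ (⊤ : ℕ∞) ψ) : ContDiff ℝ (⊤ : ℕ∞) (pd i a ψ) :=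
  (hψ.fderiv_right (m := (⊤:ℕ∞)) (by simp)).clm_apply contDiff_const

lemma hcs_pd (i : Fin N) (a : Fin 3) {ψ : (Fin N → E3) → ℂ}
    (hψs : HasCompactSupport ψ) : HasCompactSupport (pd i a ψ) :=
  (hψs.fderiv ℝ).comp_left
    (g := fun L : (Fin N → E3) →L[ℝ] ℂ => L (Pi.single i (EuclideanSpace.single a 1))) rfl

lemma cont_lapI (i : Fin N) {ψ : (Fin N → E3) → ℂ} (hψ : ContDiff ℝ (⊤ : ℕ∞) ψ) :
    Continuous (lapI i ψ) := by
  apply continuous_finset_sum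
  intro a _
  exact (contDiff_pd i a (contDiff_pd i a hψ)).continuous

lemma hcs_lapI (i : Fin N) {ψ : (Fin N → E3) → ℂ} (hψs : HasCompactSupport ψ) :
    HasCompactSupport (lapI i ψ) := by
  have : lapI i ψ = fun x => pd i 0 (pd i 0 ψ) x + (pd i 1 (pd i 1 ψ) x + pd i 2 (pd i 2 ψ) x) := by
    funext x; simp [lapI, Fin.sum_univ_three, add_assoc]
  rw [this]
  exact (hcs_pd i 0 (hcs_pd i 0 hψs)).add ((hcs_pd i 1 (hcs_pd i 1 hψs)).add (hcs_pd i 2 (hcs_pd i 2 hψs)))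

lemma conj_mul_self (z : ℂ) : (starRingEnd ℂ) z * z = (Complex.normSq z : ℂ) := by
  rw [mul_comm, Complex.mul_conj]

lemma ibp_coord (i : Fin N) (a : Fin 3)
    {ψ : (Fin N → E3) → ℂ} (hψ : ContDiff ℝ (⊤ : ℕ∞) ψ) (hψs : HasCompactSupport ψ)
    (c : (Fin N → E3) → ℝ) (hc : Continuous c)
    (hci : ∀ (x : Fin N → E3) (t : ℝ),
      c (x + t • (Pi.single i (EuclideanSpace.single a 1) : Fin N → E3)) = c x) :
    ∫ x, ((c x : ℂ) * (starRingEnd ℂ) (ψ x)) * (-(pd i a (pd i a ψ) x))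
      = ((∫ x, c x * Complex.normSq (pd i a ψ x) : ℝ) : ℂ) := by
  set v : Fin N → E3 := Pi.single i (EuclideanSpace.single a 1) with hv
  set f : (Fin N → E3) → ℂ := fun x => (c x : ℂ) * (starRingEnd ℂ) (ψ x) with hf
  set f' : (Fin N → E3) → ℂ := fun x => (c x : ℂ) * (starRingEnd ℂ) (pd i a ψ x) with hf'
  set g : (Fin N → E3) → ℂ := pd i a ψ with hg
  set g' : (Fin N → E3) → ℂ := pd i a (pd i a ψ) with hg'
  have hψd : Differentiable ℝ ψ := hψ.differentiable (by simp)
  have hgd : Differentiable ℝ g := (contDiff_pd i a hψ).differentiable (by simp)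
  have hfc : Continuous f :=
    (Complex.continuous_ofReal.comp hc).mul (Complex.continuous_conj.comp hψ.continuous)
  have hf'c : Continuous f' :=
    (Complex.continuous_ofReal.comp hc).mul
      (Complex.continuous_conj.comp (contDiff_pd i a hψ).continuous)
  have hgc : Continuous g := (contDiff_pd i a hψ).continuous
  have hg'c : Continuous g' := (contDiff_pd i a (contDiff_pd i a hψ)).continuous
  have hgcs : HasCompactSupport g := hcs_pd i a hψs
  have hg'cs : HasCompactSupport g' := hcs_pd i a hgcs
  have int1 : Integrable (fun x => f' x * g x) volume :=
    ((hf'c.mul hgc).integrable_of_hasCompactSupport (hgcs.mul_left))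
  have int2 : Integrable (fun x => f x * g' x) volume :=
    ((hfc.mul hg'c).integrable_of_hasCompactSupport (hg'cs.mul_left))
  have int3 : Integrable (fun x => f x * g x) volume :=
    ((hfc.mul hgc).integrable_of_hasCompactSupport (hgcs.mul_left))
  have hfl : ∀ x, HasLineDerivAt ℝ f (f' x) x v := by
    intro x
    have h1 : HasLineDerivAt ℝ ψ (pd i a ψ x) x v := (hψd x).hasFDerivAt.hasLineDerivAt v
    have h2 : HasDerivAt (fun t : ℝ => ψ (x + t • v)) (pd i a ψ x) 0 := h1
    have h3 := (h2.star).const_mul ((c x : ℂ))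
    have heq : (fun t : ℝ => f (x + t • v)) = fun t : ℝ => (c x : ℂ) * star (ψ (x + t • v)) := by
      funext t
      simp only [hf]
      rw [hci x t]
      rfl
    show HasDerivAt (fun t : ℝ => f (x + t • v)) (f' x) 0
    rw [heq]
    exact h3
  have hgl : ∀ x, HasLineDerivAt ℝ g (g' x) x v := fun x =>
    (hgd x).hasFDerivAt.hasLineDerivAt v
  have hB := integral_bilinear_hasLineDerivAt_right_eq_neg_left_of_integrable
    (μ := volume) (B := ContinuousLinearMap.mul ℝ ℂ) int1 int2 int3 (fun x _ => hfl x) (fun x _ => hgl x)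
  have key : ∫ x, f x * g' x = - ∫ x, f' x * g x := hB
  calc ∫ x, f x * (-(g' x)) = ∫ x, -(f x * g' x) := by simp only [mul_neg]
    _ = - ∫ x, f x * g' x := integral_neg _
    _ = ∫ x, f' x * g x := by rw [key, neg_neg]
    _ = ∫ x, ((c x * Complex.normSq (pd i a ψ x) : ℝ) : ℂ) := by
        congr 1
        funext x
        rw [hf', mul_assoc, conj_mul_self]
        push_cast
        ring
    _ = ((∫ x, c x * Complex.normSq (pd i a ψ x) : ℝ) : ℂ) := integral_ofReal

lemma lap_term_nonneg (i : Fin N)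
    {ψ : (Fin N → E3) → ℂ} (hψ : ContDiff ℝ (⊤ : ℕ∞) ψ) (hψs : HasCompactSupport ψ)
    (c : (Fin N → E3) → ℝ) (hc : Continuous c) (hc0 : ∀ x, 0 ≤ c x)
    (hci : ∀ (x : Fin N → E3) (t : ℝ) (w : E3),
      c (x + t • (Pi.single i w : Fin N → E3)) = c x) :
    0 ≤ (∫ x, ((c x : ℂ) * (starRingEnd ℂ) (ψ x)) * (-(lapI i ψ x))).re := by
  have hint : ∀ a : Fin 3,
      Integrable (fun x => ((c x : ℂ) * (starRingEnd ℂ) (ψ x)) * (-(pd i a (pd i a ψ) x))) volume := by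
    intro a
    apply Continuous.integrable_of_hasCompactSupport
    · exact ((Complex.continuous_ofReal.comp hc).mul
        (Complex.continuous_conj.comp hψ.continuous)).mul
        ((contDiff_pd i a (contDiff_pd i a hψ)).continuous.neg)
    · exact HasCompactSupport.mul_left ((hcs_pd i a (hcs_pd i a hψs)).comp_left (g := fun z : ℂ => -z) neg_zero)
  have hsplit : ∫ x, ((c x : ℂ) * (starRingEnd ℂ) (ψ x)) * (-(lapI i ψ x))
      = ∑ a : Fin 3, ∫ x, ((c x : ℂ) * (starRingEnd ℂ) (ψ x)) * (-(pd i a (pd i a ψ) x)) := by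
    rw [← integral_finset_sum _ (fun a _ => hint a)]
    congr 1
    funext x
    simp [lapI, Finset.mul_sum, mul_neg]
  rw [hsplit]
  rw [Complex.re_sum]
  apply Finset.sum_nonneg
  intro a _
  rw [ibp_coord i a hψ hψs c hc (fun x t => hci x t _)]
  rw [Complex.ofReal_re]
  apply integral_nonneg
  intro x
  exact mul_nonneg (hc0 x) (Complex.normSq_nonneg _)

/-- For a nonnegative potential, the interaction terms not involving the pair `(x₁, x₂)`
may be discarded in the lower bound for the cross term `Re ∫ conj(h_1 ψ) h_2 ψ`. -/
theorem cross_term_lower_bound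
    (n : ℕ) (V : E3 → ℝ) (hV : Continuous V) (hVb : ∃ M : ℝ, ∀ x : E3, |V x| ≤ M)
    (hVnn : ∀ x : E3, 0 ≤ V x) (hVe : ∀ x : E3, V (-x) = V x)
    (ψ : (Fin (n+2) → E3) → ℂ)
    (hψ : ContDiff ℝ (⊤ : ℕ∞) ψ) (hψs : HasCompactSupport ψ) :
    (∫ x : Fin (n+2) → E3, (starRingEnd ℂ) (hOp V 0 ψ x) * hOp V 1 ψ x).re
      ≥ (∫ x : Fin (n+2) → E3,
          (starRingEnd ℂ) (-lapI 0 ψ x + (1/2) * (V (x 0 - x 1) : ℂ) * ψ x)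
            * (-lapI 1 ψ x + (1/2) * (V (x 0 - x 1) : ℂ) * ψ x)).re := by
  classical
  have h01 : (0 : Fin (n+2)) ≠ 1 := by simp [Fin.ext_iff]
  have h10 : (1 : Fin (n+2)) ≠ 0 := h01.symm
  set v : (Fin (n+2) → E3) → ℝ := fun x => V (x 0 - x 1) with hvdef
  set r₁ : (Fin (n+2) → E3) → ℝ :=
    fun x => ∑ k ∈ (Finset.univ.erase (0 : Fin (n+2))).erase 1, V (x 0 - x k) with hr1def
  set r₂ : (Fin (n+2) → E3) → ℝ :=
    fun x => ∑ k ∈ (Finset.univ.erase (1 : Fin (n+2))).erase 0, V (x 1 - x k) with hr2def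
  set A : (Fin (n+2) → E3) → ℂ :=
    fun x => -lapI 0 ψ x + (1/2) * ((v x : ℝ) : ℂ) * ψ x with hAdef
  set Bf : (Fin (n+2) → E3) → ℂ :=
    fun x => -lapI 1 ψ x + (1/2) * ((v x : ℝ) : ℂ) * ψ x with hBdef
  -- continuity and nonnegativity
  have hψc := hψ.continuous
  have hvc : Continuous v := hV.comp ((continuous_apply (0 : Fin (n+2))).sub (continuous_apply 1))
  have hr1c : Continuous r₁ := continuous_finset_sum _ fun k _ =>
    hV.comp ((continuous_apply (0 : Fin (n+2))).sub (continuous_apply k))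
  have hr2c : Continuous r₂ := continuous_finset_sum _ fun k _ =>
    hV.comp ((continuous_apply (1 : Fin (n+2))).sub (continuous_apply k))
  have hvnn : ∀ x, 0 ≤ v x := fun x => hVnn _
  have hr1nn : ∀ x, 0 ≤ r₁ x := fun x => Finset.sum_nonneg fun k _ => hVnn _
  have hr2nn : ∀ x, 0 ≤ r₂ x := fun x => Finset.sum_nonneg fun k _ => hVnn _
  -- invariance of r₁ under shifts of particle 1, r₂ under shifts of particle 0
  have hinv1 : ∀ (x : Fin (n+2) → E3) (t : ℝ) (w : E3),
      r₁ (x + t • (Pi.single (1 : Fin (n+2)) w : Fin (n+2) → E3)) = r₁ x := by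
    intro x t w
    simp only [hr1def]
    apply Finset.sum_congr rfl
    intro k hk
    have hk1 : k ≠ 1 := (Finset.mem_erase.1 hk).1
    have e0 : (x + t • (Pi.single (1 : Fin (n+2)) w : Fin (n+2) → E3)) 0 = x 0 := by
      simp [Pi.single_eq_of_ne h01]
    have ek : (x + t • (Pi.single (1 : Fin (n+2)) w : Fin (n+2) → E3)) k = x k := by
      simp [Pi.single_eq_of_ne hk1]
    rw [e0, ek]
  have hinv2 : ∀ (x : Fin (n+2) → E3) (t : ℝ) (w : E3),
      r₂ (x + t • (Pi.single (0 : Fin (n+2)) w : Fin (n+2) → E3)) = r₂ x := by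
    intro x t w
    simp only [hr2def]
    apply Finset.sum_congr rfl
    intro k hk
    have hk0 : k ≠ 0 := (Finset.mem_erase.1 hk).1
    have e1 : (x + t • (Pi.single (0 : Fin (n+2)) w : Fin (n+2) → E3)) 1 = x 1 := by
      simp [Pi.single_eq_of_ne h10]
    have ek : (x + t • (Pi.single (0 : Fin (n+2)) w : Fin (n+2) → E3)) k = x k := by
      simp [Pi.single_eq_of_ne hk0]
    rw [e1, ek]
  -- decomposition of the potential sums
  have hmem1 : (1 : Fin (n+2)) ∈ Finset.univ.erase (0 : Fin (n+2)) :=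
    Finset.mem_erase.2 ⟨h10, Finset.mem_univ _⟩
  have hmem0 : (0 : Fin (n+2)) ∈ Finset.univ.erase (1 : Fin (n+2)) :=
    Finset.mem_erase.2 ⟨h01, Finset.mem_univ _⟩
  have hsub : ∀ x : Fin (n+2) → E3, V (x 1 - x 0) = V (x 0 - x 1) := by
    intro x; rw [← neg_sub (x 0) (x 1), hVe]
  have hs0 : ∀ x : Fin (n+2) → E3,
      (∑ k ∈ Finset.univ.erase (0 : Fin (n+2)), V (x 0 - x k)) = v x + r₁ x := by
    intro x
    simp only [hvdef, hr1def]
    exact (Finset.add_sum_erase _ _ hmem1).symm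
  have hs1 : ∀ x : Fin (n+2) → E3,
      (∑ k ∈ Finset.univ.erase (1 : Fin (n+2)), V (x 1 - x k)) = v x + r₂ x := by
    intro x
    simp only [hvdef, hr2def]
    rw [← Finset.add_sum_erase _ _ hmem0, hsub x]
  -- decomposition of the Hamiltonian pieces
  have h0eq : ∀ x, hOp V 0 ψ x = A x + ((r₁ x / 2 : ℝ) : ℂ) * ψ x := by
    intro x
    simp only [hOp, hAdef, hs0 x]
    push_cast
    ring
  have h1eq : ∀ x, hOp V 1 ψ x = Bf x + ((r₂ x / 2 : ℝ) : ℂ) * ψ x := by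
    intro x
    simp only [hOp, hBdef, hs1 x]
    push_cast
    ring
  -- the three correction terms
  set T1 : (Fin (n+2) → E3) → ℂ :=
    fun x => ((r₂ x / 2 : ℝ) : ℂ) * ((starRingEnd ℂ) (A x) * ψ x) with hT1def
  set T2 : (Fin (n+2) → E3) → ℂ :=
    fun x => ((r₁ x / 2 : ℝ) : ℂ) * ((starRingEnd ℂ) (ψ x) * Bf x) with hT2def
  set T3 : (Fin (n+2) → E3) → ℂ :=
    fun x => ((r₁ x / 2 * (r₂ x / 2) : ℝ) : ℂ) * ((starRingEnd ℂ) (ψ x) * ψ x) with hT3def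
  have hexp : ∀ x, (starRingEnd ℂ) (hOp V 0 ψ x) * hOp V 1 ψ x
      = (starRingEnd ℂ) (A x) * Bf x + (T1 x + T2 x + T3 x) := by
    intro x
    rw [h0eq x, h1eq x]
    simp only [hT1def, hT2def, hT3def, map_add, map_mul, Complex.conj_ofReal]
    push_cast
    ring
  -- continuity / compact support / integrability
  have cA : Continuous A := (cont_lapI 0 hψ).neg.add
    ((continuous_const.mul (Complex.continuous_ofReal.comp hvc)).mul hψc)
  have cB : Continuous Bf := (cont_lapI 1 hψ).neg.add
    ((continuous_const.mul (Complex.continuous_ofReal.comp hvc)).mul hψc)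
  have csA : HasCompactSupport A :=
    HasCompactSupport.add ((hcs_lapI 0 hψs).comp_left (g := fun z : ℂ => -z) neg_zero)
      (HasCompactSupport.mul_left hψs)
  have csB : HasCompactSupport Bf :=
    HasCompactSupport.add ((hcs_lapI 1 hψs).comp_left (g := fun z : ℂ => -z) neg_zero)
      (HasCompactSupport.mul_left hψs)
  have int0 : Integrable (fun x => (starRingEnd ℂ) (A x) * Bf x) volume :=
    ((Complex.continuous_conj.comp cA).mul cB).integrable_of_hasCompactSupport csB.mul_left
  have int1 : Integrable T1 volume := by
    apply Continuous.integrable_of_hasCompactSupport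
    · exact (Complex.continuous_ofReal.comp (hr2c.div_const 2)).mul
        ((Complex.continuous_conj.comp cA).mul hψc)
    · exact HasCompactSupport.mul_left (HasCompactSupport.mul_left hψs)
  have int2 : Integrable T2 volume := by
    apply Continuous.integrable_of_hasCompactSupport
    · exact (Complex.continuous_ofReal.comp (hr1c.div_const 2)).mul
        ((Complex.continuous_conj.comp hψc).mul cB)
    · exact HasCompactSupport.mul_left (HasCompactSupport.mul_left csB)
  have int3 : Integrable T3 volume := by
    apply Continuous.integrable_of_hasCompactSupport
    · exact (Complex.continuous_ofReal.comp ((hr1c.div_const 2).mul (hr2c.div_const 2))).mul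
        ((Complex.continuous_conj.comp hψc).mul hψc)
    · exact HasCompactSupport.mul_left (HasCompactSupport.mul_left hψs)
  -- split the integral
  have hsplit : (∫ x, (starRingEnd ℂ) (hOp V 0 ψ x) * hOp V 1 ψ x)
      = (∫ x, (starRingEnd ℂ) (A x) * Bf x) + ((∫ x, T1 x) + (∫ x, T2 x) + (∫ x, T3 x)) := by
    calc (∫ x, (starRingEnd ℂ) (hOp V 0 ψ x) * hOp V 1 ψ x)
        = ∫ x, ((starRingEnd ℂ) (A x) * Bf x + (T1 x + T2 x + T3 x)) := by simp_rw [hexp]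
      _ = _ := by
          have i12 : Integrable (fun x => T1 x + T2 x) volume := int1.add int2
          have i123 : Integrable (fun x => T1 x + T2 x + T3 x) volume := i12.add int3
          rw [integral_add int0 i123, integral_add i12 int3, integral_add int1 int2]
  -- positivity of the three correction terms
  have hT3nn : 0 ≤ (∫ x, T3 x).re := by
    have hpt : ∀ x, T3 x = ((r₁ x / 2 * (r₂ x / 2) * Complex.normSq (ψ x) : ℝ) : ℂ) := by
      intro x
      simp only [hT3def, conj_mul_self]
      push_cast
      ring
    simp_rw [hpt]
    have hOR : (∫ x, ((r₁ x / 2 * (r₂ x / 2) * Complex.normSq (ψ x) : ℝ) : ℂ))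
        = ((∫ x, r₁ x / 2 * (r₂ x / 2) * Complex.normSq (ψ x) : ℝ) : ℂ) := integral_ofReal
    rw [hOR, Complex.ofReal_re]
    apply integral_nonneg
    intro x
    exact mul_nonneg (mul_nonneg (div_nonneg (hr1nn x) (by norm_num))
      (div_nonneg (hr2nn x) (by norm_num))) (Complex.normSq_nonneg _)
  have hT1nn : 0 ≤ (∫ x, T1 x).re := by
    have hpt : ∀ x, T1 x = ((r₂ x / 2 : ℝ) : ℂ) * ((starRingEnd ℂ) (-lapI 0 ψ x) * ψ x)
        + ((r₂ x / 2 * (v x / 2) * Complex.normSq (ψ x) : ℝ) : ℂ) := by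
      intro x
      simp only [hT1def, hAdef, map_add, map_mul, map_neg, map_div₀, map_one, map_ofNat,
        Complex.conj_ofReal]
      push_cast
      linear_combination ((v x : ℝ) : ℂ) / 4 * ((r₂ x : ℝ) : ℂ) * conj_mul_self (ψ x)
    have intU : Integrable (fun x => ((r₂ x / 2 : ℝ) : ℂ)
        * ((starRingEnd ℂ) (-lapI 0 ψ x) * ψ x)) volume := by
      apply Continuous.integrable_of_hasCompactSupport
      · exact (Complex.continuous_ofReal.comp (hr2c.div_const 2)).mul
          ((Complex.continuous_conj.comp (cont_lapI 0 hψ).neg).mul hψc)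
      · exact HasCompactSupport.mul_left (HasCompactSupport.mul_left hψs)
    have intW : Integrable (fun x =>
        ((r₂ x / 2 * (v x / 2) * Complex.normSq (ψ x) : ℝ) : ℂ)) volume := by
      apply Continuous.integrable_of_hasCompactSupport
      · exact Complex.continuous_ofReal.comp (((hr2c.div_const 2).mul (hvc.div_const 2)).mul
          (Complex.continuous_normSq.comp hψc))
      · apply HasCompactSupport.comp_left (g := fun t : ℝ => (t : ℂ)) _ Complex.ofReal_zero
        exact HasCompactSupport.mul_left (hψs.comp_left (g := Complex.normSq) (map_zero _))
    simp_rw [hpt]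
    rw [integral_add intU intW, Complex.add_re]
    have hU : 0 ≤ (∫ x, ((r₂ x / 2 : ℝ) : ℂ) * ((starRingEnd ℂ) (-lapI 0 ψ x) * ψ x)).re := by
      have hconj : (∫ x, ((r₂ x / 2 : ℝ) : ℂ) * ((starRingEnd ℂ) (-lapI 0 ψ x) * ψ x))
          = (starRingEnd ℂ) (∫ x, (((r₂ x / 2 : ℝ) : ℂ) * (starRingEnd ℂ) (ψ x))
              * (-(lapI 0 ψ x))) := by
        rw [← integral_conj]
        congr 1
        funext x
        simp only [map_mul, map_neg, Complex.conj_conj, Complex.conj_ofReal]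
        ring
      rw [hconj, Complex.conj_re]
      exact lap_term_nonneg 0 hψ hψs (fun x => r₂ x / 2) (hr2c.div_const 2)
        (fun x => div_nonneg (hr2nn x) (by norm_num))
        (fun x t w => by show r₂ (x + t • (Pi.single (0 : Fin (n+2)) w : Fin (n+2) → E3)) / 2 = r₂ x / 2; rw [hinv2 x t w])
    have hW : 0 ≤ (∫ x, ((r₂ x / 2 * (v x / 2) * Complex.normSq (ψ x) : ℝ) : ℂ)).re := by
      have hOR : (∫ x, ((r₂ x / 2 * (v x / 2) * Complex.normSq (ψ x) : ℝ) : ℂ))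
          = ((∫ x, r₂ x / 2 * (v x / 2) * Complex.normSq (ψ x) : ℝ) : ℂ) := integral_ofReal
      rw [hOR, Complex.ofReal_re]
      apply integral_nonneg
      intro x
      exact mul_nonneg (mul_nonneg (div_nonneg (hr2nn x) (by norm_num))
        (div_nonneg (hvnn x) (by norm_num))) (Complex.normSq_nonneg _)
    linarith
  have hT2nn : 0 ≤ (∫ x, T2 x).re := by
    have hpt : ∀ x, T2 x = (((r₁ x / 2 : ℝ) : ℂ) * (starRingEnd ℂ) (ψ x)) * (-(lapI 1 ψ x))
        + ((r₁ x / 2 * (v x / 2) * Complex.normSq (ψ x) : ℝ) : ℂ) := by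
      intro x
      simp only [hT2def, hBdef]
      push_cast
      linear_combination ((v x : ℝ) : ℂ) / 4 * ((r₁ x : ℝ) : ℂ) * conj_mul_self (ψ x)
    have intU : Integrable (fun x => (((r₁ x / 2 : ℝ) : ℂ) * (starRingEnd ℂ) (ψ x))
        * (-(lapI 1 ψ x))) volume := by
      apply Continuous.integrable_of_hasCompactSupport
      · exact ((Complex.continuous_ofReal.comp (hr1c.div_const 2)).mul
          (Complex.continuous_conj.comp hψc)).mul (cont_lapI 1 hψ).neg
      · exact HasCompactSupport.mul_left
          ((hcs_lapI 1 hψs).comp_left (g := fun z : ℂ => -z) neg_zero)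
    have intW : Integrable (fun x =>
        ((r₁ x / 2 * (v x / 2) * Complex.normSq (ψ x) : ℝ) : ℂ)) volume := by
      apply Continuous.integrable_of_hasCompactSupport
      · exact Complex.continuous_ofReal.comp (((hr1c.div_const 2).mul (hvc.div_const 2)).mul
          (Complex.continuous_normSq.comp hψc))
      · apply HasCompactSupport.comp_left (g := fun t : ℝ => (t : ℂ)) _ Complex.ofReal_zero
        exact HasCompactSupport.mul_left (hψs.comp_left (g := Complex.normSq) (map_zero _))
    simp_rw [hpt]
    rw [integral_add intU intW, Complex.add_re]
    have hU : 0 ≤ (∫ x, (((r₁ x / 2 : ℝ) : ℂ) * (starRingEnd ℂ) (ψ x)) * (-(lapI 1 ψ x))).re :=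
      lap_term_nonneg 1 hψ hψs (fun x => r₁ x / 2) (hr1c.div_const 2)
        (fun x => div_nonneg (hr1nn x) (by norm_num))
        (fun x t w => by show r₁ (x + t • (Pi.single (1 : Fin (n+2)) w : Fin (n+2) → E3)) / 2 = r₁ x / 2; rw [hinv1 x t w])
    have hW : 0 ≤ (∫ x, ((r₁ x / 2 * (v x / 2) * Complex.normSq (ψ x) : ℝ) : ℂ)).re := by
      have hOR : (∫ x, ((r₁ x / 2 * (v x / 2) * Complex.normSq (ψ x) : ℝ) : ℂ))
          = ((∫ x, r₁ x / 2 * (v x / 2) * Complex.normSq (ψ x) : ℝ) : ℂ) := integral_ofReal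
      rw [hOR, Complex.ofReal_re]
      apply integral_nonneg
      intro x
      exact mul_nonneg (mul_nonneg (div_nonneg (hr1nn x) (by norm_num))
        (div_nonneg (hvnn x) (by norm_num))) (Complex.normSq_nonneg _)
    linarith
  -- conclude
  have hRHSeq : (∫ x : Fin (n+2) → E3,
      (starRingEnd ℂ) (-lapI 0 ψ x + (1/2) * (V (x 0 - x 1) : ℂ) * ψ x)
        * (-lapI 1 ψ x + (1/2) * (V (x 0 - x 1) : ℂ) * ψ x))
      = ∫ x, (starRingEnd ℂ) (A x) * Bf x := by
    simp only [hAdef, hBdef, hvdef]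
  rw [ge_iff_le, hRHSeq, hsplit]
  simp only [Complex.add_re]
  linarith
end
end
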